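/- Let A be an n-dimensional complex Zinbiel algebra that is zero-filiform, i.e. dim A^i = (n+1) − i for 1 ≤ i ≤ n+1. Then A is isomorphic to NF_n; equivalently, A has a basis e_1, …, e_n in which e_i∘e_j = C(i+j−1, j)·e_{i+j} whenever 2 ≤ i+j ≤ n and all other products of basis vectors are zero. -/

import Mathlib

/-!
Pick `x ∉ A²`; since `A²` has codimension one, `A = ℂx + A²`. Writing `x^(k+1) = x ∘ x^k`, the
Zinbiel identity gives `x^i ∘ x^j = C(i+j-1, j) x^(i+j)` by induction on `i + j`. Expanding
`A^(k+1) = A ∘ A^k` with `A = ℂx + A²` and (inductively) `A^k = ℂx^k + A^(k+1)` shows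
`A^(k+1) = ℂx^(k+1) + A^(k+2)`, because `A² ∘ A^k ⊆ A^(k+2)`. As `A^(n+1) = 0`, the powers
`x, …, x^n` span `A`; there are `n = dim A` of them, so they form a basis with the products of
`NF_n`, and `x^m = 0` for `m > n`.
-/

/-- A complex Zinbiel algebra structure on the module `A`: a bilinear
multiplication satisfying `(x∘y)∘z = x∘(y∘z) + x∘(z∘y)`. -/
structure ZinbielStr (A : Type*) [AddCommGroup A] [Module ℂ A] where
  mul : A →ₗ[ℂ] A →ₗ[ℂ] A
  zinbiel : ∀ x y z : A, mul (mul x y) z = mul x (mul y z) + mul x (mul z y)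

namespace ZinbielStr

variable {A : Type*} [AddCommGroup A] [Module ℂ A]

/-- `M.lcs k` is the term `A^k` of the lower central series for `k ≥ 1`
(`A^1 = A`, `A^{k+1} = span (A ∘ A^k)`), with the convention `M.lcs 0 = ⊤`. -/
def lcs (M : ZinbielStr A) : ℕ → Submodule ℂ A
  | 0 => ⊤
  | 1 => ⊤
  | k + 2 => Submodule.span ℂ {z | ∃ a b, b ∈ lcs M (k + 1) ∧ z = M.mul a b}

/-- A Zinbiel algebra is nilpotent when some term of the lower central series vanishes. -/
def IsNilpotent (M : ZinbielStr A) : Prop := ∃ s, 1 ≤ s ∧ M.lcs s = ⊥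

theorem _root_.Submodule.exists_sup_span_singleton_eq_top {K V : Type*} [DivisionRing K]
    [AddCommGroup V] [Module K V] [FiniteDimensional K V] {W : Submodule K V}
    (h : Module.finrank K V ≤ Module.finrank K W + 1) : ∃ x, W ⊔ Submodule.span K {x} = ⊤ := by
  by_cases hW : W = ⊤
  · exact ⟨0, by simp [hW]⟩
  obtain ⟨x, -, hx⟩ := SetLike.exists_of_lt (lt_top_iff_ne_top.2 hW)
  refine ⟨x, Submodule.eq_top_of_finrank_eq (le_antisymm (Submodule.finrank_le _) ?_)⟩
  rwa [Submodule.finrank_sup_span_singleton hx]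

open Submodule

variable (M : ZinbielStr A)

theorem lcs_antitone : Antitone M.lcs := by
  refine antitone_nat_of_succ_le fun k => ?_
  induction k with
  | zero => exact le_top
  | succ k ih =>
    cases k with
    | zero => exact le_top
    | succ k =>
      exact span_mono fun z ⟨a, b, hb, hz⟩ => ⟨a, b, ih hb, hz⟩

theorem mul_mem_lcs_succ {j : ℕ} (hj : 1 ≤ j) (x : A) {y : A} (hy : y ∈ M.lcs j) :
    M.mul x y ∈ M.lcs (j + 1) := by
  obtain ⟨j, rfl⟩ := Nat.exists_eq_add_of_le' hj
  exact subset_span ⟨x, y, hy, rfl⟩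

theorem mul_mem_lcs_add {i j : ℕ} (hi : 1 ≤ i) (hj : 1 ≤ j) {x y : A} (hx : x ∈ M.lcs i)
    (hy : y ∈ M.lcs j) : M.mul x y ∈ M.lcs (i + j) := by
  -- induction on `i + j`: the Zinbiel identity for `(a ∘ b) ∘ y` produces both `b ∘ y` and `y ∘ b`
  induction h : i + j using Nat.strong_induction_on generalizing i j x y with
  | _ s ih =>
  subst h
  obtain ⟨i, rfl⟩ := Nat.exists_eq_add_of_le' hi
  cases i with
  | zero => rw [add_comm]; exact M.mul_mem_lcs_succ hj x hy
  | succ i =>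
    induction hx using span_induction with
    | mem z hz =>
      obtain ⟨a, b, hb, rfl⟩ := hz
      rw [M.zinbiel]
      refine add_mem ?_ ?_
      · have := ih _ (by omega) (by omega) hj hb hy rfl
        rw [show i + 1 + 1 + j = i + 1 + j + 1 by omega]
        exact M.mul_mem_lcs_succ (by omega) a this
      · have := ih _ (by omega) hj (by omega) hy hb rfl
        rw [show i + 1 + 1 + j = j + (i + 1) + 1 by omega]
        exact M.mul_mem_lcs_succ (by omega) a this
    | zero => simp
    | add u v _ _ hu hv => rw [map_add, LinearMap.add_apply]; exact add_mem hu hv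
    | smul c u _ hu => rw [map_smul, LinearMap.smul_apply]; exact smul_mem _ c hu

/-- The right-normed power `x^(k+1) = x ∘ (x ∘ (⋯ ∘ x))`, indexed from `0` like `Fin n`. -/
def powSucc (x : A) : ℕ → A
  | 0 => x
  | k + 1 => M.mul x (powSucc x k)

@[simp] theorem powSucc_zero (x : A) : M.powSucc x 0 = x := rfl

theorem powSucc_succ (x : A) (k : ℕ) : M.powSucc x (k + 1) = M.mul x (M.powSucc x k) := rfl

theorem powSucc_mem_lcs (x : A) (k : ℕ) : M.powSucc x k ∈ M.lcs (k + 1) := by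
  induction k with
  | zero => exact mem_top
  | succ k ih => exact M.mul_mem_lcs_succ (by omega) x ih

theorem powSucc_mul_powSucc (x : A) (i j : ℕ) :
    M.mul (M.powSucc x i) (M.powSucc x j) =
      ((i + j + 1).choose (j + 1) : ℂ) • M.powSucc x (i + j + 1) := by
  induction h : i + j using Nat.strong_induction_on generalizing i j with
  | _ s ih =>
  subst h
  cases i with
  | zero => simp [powSucc_succ]
  | succ i =>
    rw [powSucc_succ, M.zinbiel, ih (i + j) (by omega) i j rfl, ih (j + i) (by omega) j i rfl,
      map_smul, map_smul, add_comm j i, ← powSucc_succ, ← add_smul,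
      show i + 1 + j + 1 = i + j + 1 + 1 by omega]
    -- Pascal's rule, after `C(i+j+1, i+1) = C(i+j+1, j)`
    congr 1
    rw [Nat.choose_symm_of_eq_add (by omega : i + j + 1 = (i + 1) + j),
      Nat.choose_succ_succ' (i + j + 1) j]
    push_cast
    ring

theorem powSucc_eq_zero {x : A} {m k : ℕ} (hm : M.lcs (m + 1) = ⊥) (hk : m ≤ k) :
    M.powSucc x k = 0 := by
  simpa [hm] using M.lcs_antitone (by omega : m + 1 ≤ k + 1) (M.powSucc_mem_lcs x k)

/-- `A^(k+2)` is spanned by products `a ∘ b` with `a ∈ A² + ℂx` and `b ∈ A^(k+2) + ℂx^(k+1)`;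
of the four resulting terms only `x ∘ x^(k+1)` escapes `A^(k+3)`. -/
theorem lcs_le_sup_span_powSucc {x : A} (hx : M.lcs 2 ⊔ span ℂ {x} = ⊤) (k : ℕ) :
    M.lcs (k + 1) ≤ M.lcs (k + 2) ⊔ span ℂ {M.powSucc x k} := by
  induction k with
  | zero => simp [hx]
  | succ k ih =>
    refine span_le.2 ?_
    rintro _ ⟨a, b, hb, rfl⟩
    obtain ⟨a₂, ha₂, _, hc, rfl⟩ := mem_sup.1 (hx ▸ mem_top : a ∈ M.lcs 2 ⊔ span ℂ {x})
    obtain ⟨b₂, hb₂, _, hd, rfl⟩ := mem_sup.1 (ih hb)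
    obtain ⟨c, rfl⟩ := mem_span_singleton.1 hc
    obtain ⟨d, rfl⟩ := mem_span_singleton.1 hd
    simp only [map_add, map_smul, LinearMap.add_apply, LinearMap.smul_apply, ← powSucc_succ,
      SetLike.mem_coe]
    refine add_mem (add_mem ?_ (smul_mem _ c ?_)) (smul_mem _ d (add_mem ?_ (smul_mem _ c ?_)))
    · exact mem_sup_left
        (M.lcs_antitone (by omega) (M.mul_mem_lcs_add (by omega) (by omega) ha₂ hb₂))
    · exact mem_sup_left (M.mul_mem_lcs_succ (by omega) x hb₂)
    · rw [show k + 1 + 2 = 2 + (k + 1) by omega]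
      exact mem_sup_left (M.mul_mem_lcs_add (by omega) (by omega) ha₂ (M.powSucc_mem_lcs x k))
    · exact mem_sup_right (mem_span_singleton_self _)

theorem lcs_sup_span_powSucc_eq_top {x : A} (hx : M.lcs 2 ⊔ span ℂ {x} = ⊤) (m : ℕ) :
    M.lcs (m + 1) ⊔ span ℂ (M.powSucc x '' Set.Iio m) = ⊤ := by
  induction m with
  | zero => exact top_unique le_sup_left
  | succ m ih =>
    refine top_unique (ih.ge.trans (sup_le ((M.lcs_le_sup_span_powSucc hx m).trans ?_) ?_))
    · exact sup_le_sup_left (span_le.2 (Set.singleton_subset_iff.2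
        (subset_span (Set.mem_image_of_mem _ (Set.mem_Iio.2 m.lt_succ_self))))) _
    · exact le_sup_of_le_right (span_mono (Set.image_mono (Set.Iio_subset_Iio m.le_succ)))

theorem zero_filiform_classification {A : Type*} [AddCommGroup A] [Module ℂ A]
    [FiniteDimensional ℂ A] (M : ZinbielStr A) (n : ℕ)
    (hdim : Module.finrank ℂ A = n)
    (hzf : ∀ i : ℕ, 1 ≤ i → i ≤ n + 1 → Module.finrank ℂ (M.lcs i) = n + 1 - i) :
    ∃ e : Module.Basis (Fin n) ℂ A, ∀ i j : Fin n,
      M.mul (e i) (e j) =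
        if h : (i : ℕ) + (j : ℕ) + 2 ≤ n then
          (((i : ℕ) + (j : ℕ) + 1).choose ((j : ℕ) + 1) : ℂ) •
            e ⟨(i : ℕ) + (j : ℕ) + 1, by omega⟩
        else 0 := by
  have hbot : M.lcs (n + 1) = ⊥ :=
    finrank_eq_zero.1 (by simpa using hzf (n + 1) (by omega) le_rfl)
  obtain ⟨x, hx⟩ : ∃ x, M.lcs 2 ⊔ span ℂ {x} = ⊤ := by
    refine exists_sup_span_singleton_eq_top ?_
    by_cases hn : n = 0
    · omega
    · have := hzf 2 (by omega) (by omega); omega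
  have hspan : ⊤ ≤ span ℂ (Set.range fun i : Fin n => M.powSucc x i) := by
    rw [← Function.comp_def, Set.range_comp, Fin.range_val, ← M.lcs_sup_span_powSucc_eq_top hx n,
      hbot, bot_sup_eq]
  refine ⟨basisOfTopLeSpanOfCardEqFinrank _ hspan (by simp [hdim]), fun i j => ?_⟩
  simp only [coe_basisOfTopLeSpanOfCardEqFinrank, powSucc_mul_powSucc]
  split_ifs with h
  · rfl
  · rw [M.powSucc_eq_zero hbot (by omega), smul_zero]

end ZinbielStr
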